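/- Let S be a finitely generated semigroup with rational word problem. Then every subsemigroup of S that is a group is finite. -/

import Mathlib

/-- An asynchronous two-tape finite state automaton: in each step it reads at
most one symbol from each tape. -/
structure AsyncFSA (A : Type*) (B : Type*) where
  Q : Type
  [fin : Finite Q]
  init : Q
  accept : Set Q
  trans : Q → Option A → Option B → Q → Prop

namespace AsyncFSA

variable {A B : Type*}

/-- Computations of an asynchronous automaton. -/
inductive Reaches (M : AsyncFSA A B) : M.Q → List A → List B → M.Q → Prop
  | refl (q : M.Q) : Reaches M q [] [] q
  | step {p q r : M.Q} {a : Option A} {b : Option B} {u : List A} {v : List B} :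
      M.trans p a b q → Reaches M q u v r →
      Reaches M p (a.toList ++ u) (b.toList ++ v) r

/-- Acceptance of a pair of strings. -/
def Accepts (M : AsyncFSA A B) (u : List A) (v : List B) : Prop :=
  ∃ q ∈ M.accept, M.Reaches M.init u v q

end AsyncFSA

/-- A relation on strings is rational if it is decided by an asynchronous
two-tape finite state automaton. -/
def IsRationalRel {A B : Type*} (R : Set (List A × List B)) : Prop :=
  ∃ M : AsyncFSA A B, ∀ p : List A × List B, p ∈ R ↔ M.Accepts p.1 p.2

/-- Pad a pair of strings to equal length, using `none` as padding symbol. -/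
def padPair {A : Type*} (p : List A × List A) : List (Option A × Option A) :=
  List.zip (p.1.map some ++ List.replicate (p.2.length - p.1.length) none)
           (p.2.map some ++ List.replicate (p.1.length - p.2.length) none)

/-- A relation on strings is regular if a synchronous two-tape finite state
automaton (a finite automaton over the padded pair alphabet) accepts a padded
pair exactly when the pair is in the relation. -/
def IsRegularRel {A : Type*} (R : Set (List A × List A)) : Prop :=
  ∃ (Q : Type) (_ : Fintype Q) (M : DFA (Option A × Option A) Q),
    ∀ p : List A × List A, p ∈ R ↔ padPair p ∈ M.accepts

/-- A language is regular if accepted by a finite state automaton. -/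
def IsRegularLang {A : Type*} (L : Set (List A)) : Prop :=
  ∃ (Q : Type) (_ : Fintype Q) (M : DFA A Q), ∀ w, w ∈ L ↔ w ∈ M.accepts

/-- Evaluation of a word in a semigroup (`none` for the empty word). -/
def evalWord {α : Type*} {S : Type*} [Semigroup S] (f : α → S) : List α → Option S
  | [] => none
  | a :: l => some (List.foldl (fun s x => s * f x) (f a) l)

/-- The semigroup word problem with respect to a set `A` of elements:
pairs of nonempty strings over `A` representing the same element. -/
def SWP {S : Type*} [Semigroup S] (A : Set S) : Set (List ↥A × List ↥A) :=
  {p | p.1 ≠ [] ∧ p.2 ≠ [] ∧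
    evalWord Subtype.val p.1 = evalWord Subtype.val p.2}

/-- The monoid word problem with respect to a set `A` of elements. -/
def MWP {M : Type*} [Monoid M] (A : Set M) : Set (List ↥A × List ↥A) :=
  {p | (p.1.map Subtype.val).prod = (p.2.map Subtype.val).prod}

/-- A semigroup has rational word problem if it has a finite generating set
with rational word problem. -/
def HasRationalWP (S : Type*) [Semigroup S] : Prop :=
  ∃ A : Set S, A.Finite ∧ Subsemigroup.closure A = ⊤ ∧ IsRationalRel (SWP A)

/-!
Let `e` be the identity of the group `T`, fixed as the value of a word `f`. If `v` is a shortest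
word for `y ∈ T` and `u` a word for its inverse `x`, the automaton accepts `(u v, f)`. When `v`
is long compared with `|f|` and the number of states, some state and some position on the
`f`-tape recur at two cut points of `v` lying more than `|f|` letters apart, so deleting the
factor between them leaves a word `u v'` still accepted against `f`, i.e. `x v' = e`. Then
`y = y x v' = e v'` is represented by `f v'`, which is shorter than `v`. Hence all elements of
`T` have words of bounded length over the finite alphabet `A`.
-/

attribute [instance] AsyncFSA.fin

namespace AsyncFSA

variable {A B : Type*} {M : AsyncFSA A B}

theorem Reaches.append {p q r : M.Q} {u₁ u₂ : List A} {w₁ w₂ : List B}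
    (h₁ : M.Reaches p u₁ w₁ q) (h₂ : M.Reaches q u₂ w₂ r) :
    M.Reaches p (u₁ ++ u₂) (w₁ ++ w₂) r := by
  induction h₁ with
  | refl => exact h₂
  | step ht _ ih => simpa only [List.append_assoc] using Reaches.step ht (ih h₂)

theorem Reaches.split_left {p r : M.Q} {u₁ u₂ : List A} {w : List B}
    (h : M.Reaches p (u₁ ++ u₂) w r) :
    ∃ q w₁ w₂, w = w₁ ++ w₂ ∧ M.Reaches p u₁ w₁ q ∧ M.Reaches q u₂ w₂ r := by
  generalize hu : u₁ ++ u₂ = u at h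
  induction h generalizing u₁ with
  | refl q =>
    obtain ⟨rfl, rfl⟩ := List.append_eq_nil_iff.mp hu
    exact ⟨q, [], [], rfl, .refl q, .refl q⟩
  | @step p q r a b u v ht hr ih =>
    cases u₁ with
    | nil =>
      subst hu
      exact ⟨p, [], _, rfl, .refl p, .step ht hr⟩
    | cons x u₁ =>
      cases a with
      | none =>
        obtain ⟨q', w₁, w₂, rfl, h₁, h₂⟩ := ih (u₁ := x :: u₁) hu
        exact ⟨q', b.toList ++ w₁, w₂, (List.append_assoc ..).symm, .step ht h₁, h₂⟩
      | some a =>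
        obtain ⟨rfl, htail⟩ := List.cons_eq_cons.mp hu
        obtain ⟨q', w₁, w₂, rfl, h₁, h₂⟩ := ih htail
        exact ⟨q', b.toList ++ w₁, w₂, (List.append_assoc ..).symm, .step ht h₁, h₂⟩

theorem Reaches.exists_shorten {p r : M.Q} {u v : List A} {w : List B}
    (h : M.Reaches p (u ++ v) w r) {d : ℕ}
    (hv : Nat.card M.Q * (w.length + 1) * d ≤ v.length) :
    ∃ v', v'.length + d ≤ v.length ∧ M.Reaches p (u ++ v') w r := by
  classical
  have := Fintype.ofFinite M.Q
  set n := Nat.card M.Q * (w.length + 1)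
  have hcut : ∀ t : Fin (n + 1), ∃ (q : M.Q) (k : Fin (w.length + 1)),
      M.Reaches p (u ++ v.take (t * d)) (w.take k) q ∧
        M.Reaches q (v.drop (t * d)) (w.drop k) r := by
    intro t
    have h' : M.Reaches p ((u ++ v.take (t * d)) ++ v.drop (t * d)) w r := by
      rwa [List.append_assoc, List.take_append_drop]
    obtain ⟨q, w₁, w₂, rfl, h₁, h₂⟩ := h'.split_left
    refine ⟨q, ⟨w₁.length, by simp⟩, ?_, ?_⟩
    · rwa [List.take_left]
    · rwa [List.drop_left]
  choose q k hq hk using hcut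
  obtain ⟨t₁, t₂, hne, hqk⟩ := Fintype.exists_ne_map_eq_of_card_lt (fun t ↦ (q t, k t))
    (by simp [n, Nat.card_eq_fintype_card])
  wlog hlt : t₁ < t₂ generalizing t₁ t₂
  · exact this t₂ t₁ hne.symm hqk.symm (hne.lt_or_gt.resolve_left hlt)
  obtain ⟨hq₁₂, hk₁₂⟩ := Prod.mk.inj hqk
  refine ⟨v.take (t₁ * d) ++ v.drop (t₂ * d), ?_, ?_⟩
  · have h₁₂ : (t₁ : ℕ) * d + d ≤ t₂ * d := by
      simpa [Nat.succ_mul] using Nat.mul_le_mul_right d (Nat.succ_le_of_lt hlt)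
    have h₂ : (t₂ : ℕ) * d ≤ v.length :=
      (Nat.mul_le_mul_right d (Nat.lt_succ_iff.mp t₂.isLt)).trans hv
    simp only [List.length_append, List.length_take, List.length_drop]
    omega
  · have h₁ := hq t₁
    rw [hq₁₂, hk₁₂] at h₁
    have := h₁.append (hk t₂)
    rwa [List.take_append_drop, List.append_assoc] at this

end AsyncFSA

section evalWord

variable {α S : Type*} [Semigroup S]

theorem coe_foldl_mul (g : α → S) (l : List α) (s : S) :
    ((l.foldl (fun t a ↦ t * g a) s : S) : WithOne S) =
      s * (l.map fun a ↦ (g a : WithOne S)).prod := by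
  induction l generalizing s with
  | nil => simp
  | cons a l ih => simp [ih, mul_assoc]

/-- In `WithOne S`, where the empty word gets the value `1`, `evalWord` becomes a product. -/
theorem evalWord_eq_prod (g : α → S) (l : List α) :
    (evalWord g l : WithOne S) = (l.map fun a ↦ (g a : WithOne S)).prod := by
  cases l with
  | nil => rfl
  | cons a l => exact (coe_foldl_mul g l (g a)).trans (List.prod_cons ..).symm

theorem evalWord_eq_some_iff {g : α → S} {l : List α} {s : S} :
    evalWord g l = some s ↔ (l.map fun a ↦ (g a : WithOne S)).prod = s := by
  rw [← evalWord_eq_prod]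
  exact Iff.rfl

theorem ne_nil_of_evalWord_eq_some {g : α → S} {w : List α} {s : S}
    (h : evalWord g w = some s) : w ≠ [] := by
  rintro rfl
  cases h

theorem exists_evalWord_eq_some {A : Set S} (hgen : Subsemigroup.closure A = ⊤) (s : S) :
    ∃ w : List A, evalWord Subtype.val w = some s := by
  simp only [evalWord_eq_some_iff]
  induction (hgen ▸ Subsemigroup.mem_top s : s ∈ Subsemigroup.closure A)
    using Subsemigroup.closure_induction with
  | mem a ha => exact ⟨[⟨a, ha⟩], List.prod_singleton⟩
  | mul x y _ _ hx hy =>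
    obtain ⟨wx, hwx⟩ := hx
    obtain ⟨wy, hwy⟩ := hy
    exact ⟨wx ++ wy, by rw [List.map_append, List.prod_append, hwx, hwy, WithOne.coe_mul]⟩

theorem mem_SWP_iff_of_evalWord_eq_some {A : Set S} {f w : List A} {s : S}
    (hf : evalWord Subtype.val f = some s) :
    (w, f) ∈ SWP A ↔ evalWord Subtype.val w = some s :=
  ⟨fun ⟨_, _, h⟩ ↦ h.trans hf,
    fun h ↦ ⟨ne_nil_of_evalWord_eq_some h, ne_nil_of_evalWord_eq_some hf, h.trans hf.symm⟩⟩

end evalWord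

section WordProblem

variable {S : Type*} [Semigroup S] {A : Set S} {M : AsyncFSA A A}

theorem exists_shorter_evalWord (hM : ∀ p, p ∈ SWP A ↔ M.Accepts p.1 p.2)
    {f u v : List A} {e x y : S} (hf : evalWord Subtype.val f = some e)
    (hu : evalWord Subtype.val u = some x) (hv : evalWord Subtype.val v = some y)
    (hye : y * e = y) (hyx : y * x = e) (hxy : x * y = e)
    (hlong : Nat.card M.Q * (f.length + 1) * (f.length + 1) ≤ v.length) :
    ∃ v' : List A, v'.length < v.length ∧ evalWord Subtype.val v' = some y := by
  have huv : evalWord Subtype.val (u ++ v) = some e := by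
    rw [evalWord_eq_some_iff] at hu hv ⊢
    rw [List.map_append, List.prod_append, hu, hv, ← WithOne.coe_mul, hxy]
  obtain ⟨r, hr, hrun⟩ := (hM (u ++ v, f)).mp ((mem_SWP_iff_of_evalWord_eq_some hf).mpr huv)
  obtain ⟨v', hlen, hrun'⟩ := hrun.exists_shorten hlong
  have huv' := (mem_SWP_iff_of_evalWord_eq_some hf).mp ((hM (u ++ v', f)).mpr ⟨r, hr, hrun'⟩)
  refine ⟨f ++ v', by simp only [List.length_append]; omega, ?_⟩
  rw [evalWord_eq_some_iff] at hf hu huv' ⊢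
  rw [List.map_append, List.prod_append] at huv' ⊢
  -- `e v' = (y x) v' = y (x v') = y e = y`
  rw [hf, ← hyx, WithOne.coe_mul, ← hu, mul_assoc, huv', ← WithOne.coe_mul, hye]

theorem exists_evalWord_length_le (hgen : Subsemigroup.closure A = ⊤)
    (hM : ∀ p, p ∈ SWP A ↔ M.Accepts p.1 p.2) {f : List A} {e x y : S}
    (hf : evalWord Subtype.val f = some e) (hye : y * e = y) (hyx : y * x = e)
    (hxy : x * y = e) :
    ∃ w : List A, w.length ≤ Nat.card M.Q * (f.length + 1) * (f.length + 1) ∧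
      evalWord Subtype.val w = some y := by
  obtain ⟨u, hu⟩ := exists_evalWord_eq_some hgen x
  let words := {w : List A | evalWord Subtype.val w = some y}
  have hne : words.Nonempty := exists_evalWord_eq_some hgen y
  have hv : evalWord Subtype.val (Function.argminOn List.length words hne) = some y :=
    Function.argminOn_mem _ _ hne
  refine ⟨_, not_lt.mp fun hlong ↦ ?_, hv⟩
  obtain ⟨v', hlt, hv'⟩ := exists_shorter_evalWord hM hf hu hv hye hyx hxy hlong.le
  exact Function.not_lt_argminOn List.length words hv' hlt

end WordProblem

/-- Every subsemigroup of a semigroup with rational word problem that is a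
group is finite. -/
theorem stmt_15 {S : Type*} [Semigroup S] (A : Set S) (hA : A.Finite)
    (hgen : Subsemigroup.closure A = ⊤) (hrat : IsRationalRel (SWP A)) :
    ∀ T : Subsemigroup S,
      (∃ e ∈ T, (∀ x ∈ T, e * x = x ∧ x * e = x) ∧
        ∀ x ∈ T, ∃ y ∈ T, x * y = e ∧ y * x = e) →
      (T : Set S).Finite := by
  rintro T ⟨e, -, hid, hinv⟩
  obtain ⟨M, hM⟩ := hrat
  have := hA.to_subtype
  obtain ⟨f, hf⟩ := exists_evalWord_eq_some hgen e
  have hsub : (T : Set S) ⊆ some ⁻¹' (evalWord Subtype.val ''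
      {w : List A | w.length ≤ Nat.card M.Q * (f.length + 1) * (f.length + 1)}) := by
    intro y hy
    obtain ⟨x, -, hyx, hxy⟩ := hinv y hy
    exact exists_evalWord_length_le hgen hM hf (hid y hy).2 hyx hxy
  exact (((List.finite_length_le A _).image _).preimage (Option.some_injective S).injOn).subset
    hsub
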